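/- arXiv:2307.01395 — 7 statements merged into one kernel-verified Lean document; each statement's English description precedes it below -/
import Mathlib

section
/- Let ρ : (0,∞) → (0,∞), let h : (0,∞) → (0,∞) be continuous with h(1) > 0, and let p : ℝ → [0,∞) be an even probability density on ℝ. Suppose that for every x > 0, p(x/σ)/(σ·ρ(σ)) → h(x) as σ → 0⁺, and that ∫₀^∞ min(x², 1)·h(x) dx < ∞. Then there exist d ∈ (0,2) and a slowly varying function L : (0,∞) → (0,∞) (i.e. L(a·u)/L(u) → 1 as u → ∞ for every a > 0) such that h(x) = h(1)·x^{-d-1} for all x > 0 and ρ(σ) = σ^d · L(σ^{-1}) for all σ in a neighborhood of 0. -/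
/-!
Comparing the sparsity limits at `a x` and at `x`, after rescaling `σ ↦ σ / a` in the second,
shows that `(σ/a) ρ(σ/a) / (σ ρ(σ))` tends to `h(a x)/h(x)`, which therefore does not depend on
`x`. Hence `h / h(1)` is a continuous multiplicative function on `(0, ∞)`, i.e. a power `x^c`, and
`ρ(σ/a)/ρ(σ) → a^(c+1)`: `ρ` is regularly varying at `0` with index `d = -c - 1`. Integrability
of `min(x², 1) x^c` at `∞` and at `0` forces `-3 < c < -1`, that is `0 < d < 2`.
-/

open MeasureTheory Filter Real Topology

lemma Filter.Tendsto.div_of_common_numerator {α : Type*} {l : Filter α} {f g k : α → ℝ}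
    {a b : ℝ} (hfg : Tendsto (fun x => f x / g x) l (𝓝 a))
    (hfk : Tendsto (fun x => f x / k x) l (𝓝 b)) (ha : a ≠ 0) (hb : b ≠ 0) :
    Tendsto (fun x => k x / g x) l (𝓝 (a / b)) := by
  refine (hfg.div hfk hb).congr' ?_
  filter_upwards [hfg.eventually_ne ha] with x hx
  simp only [Pi.div_apply]
  rw [div_div_div_cancel_left' _ _ (div_ne_zero_iff.1 hx).1]

lemma tendsto_div_const_nhdsGT_zero {a : ℝ} (ha : 0 < a) :
    Tendsto (fun σ : ℝ => σ / a) (𝓝[>] 0) (𝓝[>] 0) := by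
  simp_rw [div_eq_inv_mul]
  exact tendsto_iff_comap.2 (comap_mulLeft_nhdsGT_zero (inv_pos.2 ha)).ge

lemma continuous_additive_eq_mul {F : ℝ → ℝ} (hadd : ∀ s t, F (s + t) = F s + F t)
    (hF : Continuous F) (t : ℝ) : F t = t * F 1 := by
  simpa using map_real_smul (AddMonoidHom.mk' F hadd) hF t 1

lemma exists_rpow_of_map_mul {g : ℝ → ℝ} (hpos : ∀ x, 0 < x → 0 < g x)
    (hcont : ContinuousOn g (Set.Ioi 0)) (hmul : ∀ x y, 0 < x → 0 < y → g (x * y) = g x * g y) :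
    ∃ c : ℝ, ∀ x, 0 < x → g x = x ^ c := by
  set F : ℝ → ℝ := fun t => log (g (exp t))
  have hadd : ∀ s t, F (s + t) = F s + F t := fun s t => by
    simp only [F, exp_add, hmul _ _ (exp_pos s) (exp_pos t)]
    exact log_mul (hpos _ (exp_pos s)).ne' (hpos _ (exp_pos t)).ne'
  have hF : Continuous F :=
    continuousOn_log.comp_continuous (hcont.comp_continuous continuous_exp exp_pos)
      fun t => (hpos _ (exp_pos t)).ne'
  refine ⟨F 1, fun x hx => ?_⟩
  have hx' := continuous_additive_eq_mul hadd hF (log x)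
  simp only [F, exp_log hx] at hx'
  rw [← exp_log (hpos x hx), hx', rpow_def_of_pos hx]

lemma neg_three_lt_and_lt_neg_one_of_integrableOn {C c : ℝ} (hC : C ≠ 0)
    (hint : IntegrableOn (fun x : ℝ => min (x ^ 2) 1 * (C * x ^ c)) (Set.Ioi 0)) :
    -3 < c ∧ c < -1 := by
  constructor
  · have : IntegrableOn (fun x : ℝ => x ^ (c + 2)) (Set.Ioo 0 1) := by
      refine IntegrableOn.congr_fun ((hint.mono_set Set.Ioo_subset_Ioi_self).const_mul C⁻¹)
        (fun x ⟨hx₀, hx₁⟩ => ?_) measurableSet_Ioo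
      rw [min_eq_left (by nlinarith), rpow_add hx₀, rpow_two]
      field_simp
    linarith [(intervalIntegral.integrableOn_Ioo_rpow_iff one_pos).mp this]
  · refine (integrableOn_Ioi_rpow_iff one_pos).mp ?_
    refine IntegrableOn.congr_fun
      ((hint.mono_set (Set.Ioi_subset_Ioi zero_le_one)).const_mul C⁻¹)
      (fun x (hx : 1 < x) => ?_) measurableSet_Ioi
    rw [min_eq_right (by nlinarith), one_mul, inv_mul_cancel_left₀ hC]

lemma exists_slowlyVarying_of_tendsto_div {ρ : ℝ → ℝ} {d : ℝ} (hρ : ∀ σ, 0 < σ → 0 < ρ σ)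
    (hratio : ∀ a, 0 < a → Tendsto (fun σ => ρ (σ / a) / ρ σ) (𝓝[>] 0) (𝓝 (a ^ (-d)))) :
    ∃ L : ℝ → ℝ, (∀ u, 0 < u → 0 < L u) ∧
      (∀ a, 0 < a → Tendsto (fun u => L (a * u) / L u) atTop (𝓝 1)) ∧
      ∀ σ, 0 < σ → ρ σ = σ ^ d * L σ⁻¹ := by
  refine ⟨fun u => ρ u⁻¹ * u ^ d, fun u hu => mul_pos (hρ _ (inv_pos.2 hu)) (rpow_pos_of_pos hu d),
    fun a ha => ?_, fun σ hσ => ?_⟩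
  · have hlim := ((hratio a ha).comp tendsto_inv_atTop_nhdsGT_zero).mul_const (a ^ d)
    rw [← rpow_add ha, neg_add_cancel, rpow_zero] at hlim
    refine hlim.congr' ?_
    filter_upwards [eventually_gt_atTop 0] with u hu
    have := hρ _ (inv_pos.2 hu)
    rw [Function.comp_apply, mul_inv, mul_rpow ha.le hu.le, inv_mul_eq_div]
    field_simp
  · dsimp only
    rw [inv_inv, inv_rpow hσ.le]
    field_simp [(rpow_pos_of_pos hσ d).ne']

section SparseScaleFamily

variable {ρ h p : ℝ → ℝ}

lemma tendsto_rate_ratio (hhpos : ∀ x, 0 < x → 0 < h x)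
    (hlim : ∀ x, 0 < x → Tendsto (fun σ => p (x / σ) / (σ * ρ σ)) (𝓝[>] 0) (𝓝 (h x)))
    {a : ℝ} (ha : 0 < a) {x : ℝ} (hx : 0 < x) :
    Tendsto (fun σ => σ / a * ρ (σ / a) / (σ * ρ σ)) (𝓝[>] 0) (𝓝 (h (a * x) / h x)) := by
  have hrescaled : Tendsto (fun σ => p (a * x / σ) / (σ / a * ρ (σ / a))) (𝓝[>] 0) (𝓝 (h x)) :=
    ((hlim x hx).comp (tendsto_div_const_nhdsGT_zero ha)).congr fun σ => by
      rw [Function.comp_apply, div_div_eq_mul_div, mul_comm x]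
  exact (hlim _ (mul_pos ha hx)).div_of_common_numerator hrescaled (hhpos _ (mul_pos ha hx)).ne'
    (hhpos x hx).ne'

lemma exists_eq_mul_rpow_of_sparse (hhpos : ∀ x, 0 < x → 0 < h x)
    (hhcont : ContinuousOn h (Set.Ioi 0))
    (hlim : ∀ x, 0 < x → Tendsto (fun σ => p (x / σ) / (σ * ρ σ)) (𝓝[>] 0) (𝓝 (h x))) :
    ∃ c : ℝ, ∀ x, 0 < x → h x = h 1 * x ^ c := by
  have h1 := hhpos 1 one_pos
  have hmul : ∀ a x, 0 < a → 0 < x → h (a * x) / h 1 = h a / h 1 * (h x / h 1) := by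
    intro a x ha hx
    have := tendsto_nhds_unique (tendsto_rate_ratio hhpos hlim ha hx)
      (by simpa using tendsto_rate_ratio hhpos hlim ha one_pos)
    rw [div_eq_div_iff (hhpos x hx).ne' h1.ne'] at this
    field_simp
    linarith
  obtain ⟨c, hc⟩ := exists_rpow_of_map_mul (fun x hx => div_pos (hhpos x hx) h1)
    (hhcont.div_const _) hmul
  exact ⟨c, fun x hx => by rw [← hc x hx]; field_simp⟩

end SparseScaleFamily

theorem sparse_scale_family_inverse_power_general
    (ρ h p : ℝ → ℝ)
    (hρpos : ∀ σ : ℝ, 0 < σ → 0 < ρ σ)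
    (hhpos : ∀ x : ℝ, 0 < x → 0 < h x)
    (hhcont : ContinuousOn h (Set.Ioi 0))
    (hh1 : 0 < h 1)
    (hlim : ∀ x : ℝ, 0 < x →
      Tendsto (fun σ : ℝ => p (x / σ) / (σ * ρ σ)) (𝓝[>] 0) (𝓝 (h x)))
    (hint : IntegrableOn (fun x : ℝ => min (x ^ 2) 1 * h x) (Set.Ioi 0)) :
    ∃ d ∈ Set.Ioo (0 : ℝ) 2, ∃ L : ℝ → ℝ,
      (∀ u : ℝ, 0 < u → 0 < L u) ∧
      (∀ a : ℝ, 0 < a → Tendsto (fun u : ℝ => L (a * u) / L u) atTop (𝓝 1)) ∧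
      (∀ x : ℝ, 0 < x → h x = h 1 * x ^ (-d - 1)) ∧
      (∀ᶠ σ in 𝓝[>] (0 : ℝ), ρ σ = σ ^ d * L σ⁻¹) := by
  obtain ⟨c, hc⟩ := exists_eq_mul_rpow_of_sparse hhpos hhcont hlim
  have hpow : IntegrableOn (fun x : ℝ => min (x ^ 2) 1 * (h 1 * x ^ c)) (Set.Ioi 0) :=
    hint.congr_fun (fun x hx => by dsimp only; rw [hc x hx]) measurableSet_Ioi
  obtain ⟨hc₃, hc₁⟩ := neg_three_lt_and_lt_neg_one_of_integrableOn hh1.ne' hpow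
  have hratio : ∀ a, 0 < a →
      Tendsto (fun σ => ρ (σ / a) / ρ σ) (𝓝[>] 0) (𝓝 (a ^ (c + 1))) := by
    intro a ha
    have hlim_a := (tendsto_rate_ratio hhpos hlim ha one_pos).const_mul a
    rw [mul_one, hc a ha, mul_div_cancel_left₀ _ hh1.ne', mul_comm, ← rpow_add_one ha.ne']
      at hlim_a
    refine hlim_a.congr' ?_
    filter_upwards [self_mem_nhdsWithin] with σ (hσ : 0 < σ)
    field_simp
  have hexp : -(-c - 1) = c + 1 := by ring
  obtain ⟨L, hLpos, hLslow, hρL⟩ :=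
    exists_slowlyVarying_of_tendsto_div (d := -c - 1) hρpos (by simpa only [hexp] using hratio)
  refine ⟨-c - 1, ⟨by linarith, by linarith⟩, L, hLpos, hLslow, fun x hx => ?_,
    eventually_nhdsWithin_of_forall hρL⟩
  rw [hc x hx]
  ring_nf

/-- Every symmetric sparse scale family has rate `ρ(σ) = σ^d L(σ⁻¹)` with `L` slowly varying,
and an inverse-power exceedance density `h(x) = h(1) x^{-d-1}`, for some `0 < d < 2`. -/
theorem sparse_scale_family_inverse_power
    (ρ h p : ℝ → ℝ)
    (hρpos : ∀ σ : ℝ, 0 < σ → 0 < ρ σ)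
    (hhpos : ∀ x : ℝ, 0 < x → 0 < h x)
    (hhcont : ContinuousOn h (Set.Ioi 0))
    (hh1 : 0 < h 1)
    (hp_nonneg : ∀ x, 0 ≤ p x)
    (hp_even : ∀ x, p (-x) = p x)
    (hp_prob : ∫ x : ℝ, p x = 1)
    (hlim : ∀ x : ℝ, 0 < x →
      Tendsto (fun σ : ℝ => p (x / σ) / (σ * ρ σ)) (𝓝[>] 0) (𝓝 (h x)))
    (hint : IntegrableOn (fun x : ℝ => min (x ^ 2) 1 * h x) (Set.Ioi 0)) :
    ∃ d ∈ Set.Ioo (0 : ℝ) 2, ∃ L : ℝ → ℝ,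
      (∀ u : ℝ, 0 < u → 0 < L u) ∧
      (∀ a : ℝ, 0 < a → Tendsto (fun u : ℝ => L (a * u) / L u) atTop (𝓝 1)) ∧
      (∀ x : ℝ, 0 < x → h x = h 1 * x ^ (-d - 1)) ∧
      (∀ᶠ σ in 𝓝[>] (0 : ℝ), ρ σ = σ ^ d * L σ⁻¹) :=
  sparse_scale_family_inverse_power_general ρ h p hρpos hhpos hhcont hh1 hlim hint
end

section
/- For every d ∈ (0,2), ∫_ℝ (1 − e^{−x²/2}) · C_d/|x|^{d+1} dx = 1, where C_d = d·2^{d/2−1}/Γ(1−d/2). -/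
/-!
By symmetry the integral is twice the one over `(0, ∞)`. There, integrating by parts against
`v = -x^(-d)/d` (the boundary terms vanish because `0 ≤ 1 - e^(-b x²) ≤ min 1 (b x²)` and
`0 < d < 2`) turns `∫ (1 - e^(-b x²)) x^(-d-1)` into the Gaussian moment
`(2b/d) ∫ x^(1-d) e^(-b x²) = b^(d/2) Γ(1 - d/2) / d`; with `b = 1/2` the constant `C_d` is
exactly the reciprocal of twice this value.
-/

open MeasureTheory Real Set Filter Topology

section
variable {b d : ℝ}

lemma one_sub_exp_neg_le_self (t : ℝ) : 1 - exp (-t) ≤ t := by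
  linarith [add_one_le_exp (-t)]

lemma one_sub_exp_neg_mul_sq_mem_Icc (hb : 0 ≤ b) (x : ℝ) :
    1 - exp (-b * x ^ 2) ∈ Icc 0 1 := by
  have : exp (-b * x ^ 2) ≤ 1 := exp_le_one_iff.mpr (by nlinarith [sq_nonneg x])
  exact ⟨by linarith, by linarith [exp_pos (-b * x ^ 2)]⟩

lemma rpow_mul_sq {x : ℝ} (hx : x ≠ 0) (s : ℝ) : x ^ s * x ^ 2 = x ^ (s + 2) := by
  exact_mod_cast (rpow_add_natCast hx s 2).symm

lemma integral_rpow_mul_exp_neg_mul_sq (hb : 0 < b) {s : ℝ} (hs : -1 < s) :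
    ∫ x in Ioi (0 : ℝ), x ^ s * exp (-b * x ^ 2) =
      b ^ (-(s + 1) / 2) / 2 * Gamma ((s + 1) / 2) := by
  have h := integral_rpow_mul_exp_neg_mul_rpow two_pos hs hb
  simp only [rpow_two, mul_one_div] at h
  exact h

lemma integrableOn_one_sub_exp_neg_mul_sq_mul_rpow (hb : 0 ≤ b) (hd : 0 < d) (hd2 : d < 2) :
    IntegrableOn (fun x : ℝ => (1 - exp (-b * x ^ 2)) * x ^ (-d - 1)) (Ioi 0) := by
  have hmeas : AEStronglyMeasurable (fun x : ℝ => (1 - exp (-b * x ^ 2)) * x ^ (-d - 1)) :=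
    (by fun_prop : Measurable _).aestronglyMeasurable
  rw [← Ioc_union_Ioi_eq_Ioi zero_le_one]
  refine IntegrableOn.union ?_ ?_
  · have hg : IntegrableOn (fun x : ℝ => b * x ^ (1 - d)) (Ioc 0 1) :=
      ((intervalIntegral.intervalIntegrable_rpow' (by linarith)).const_mul b).1
    refine hg.mono' hmeas.restrict ?_
    filter_upwards [ae_restrict_mem measurableSet_Ioc] with x hx
    obtain ⟨h0, -⟩ := one_sub_exp_neg_mul_sq_mem_Icc hb x
    have hpow := rpow_pos_of_pos hx.1 (-d - 1)
    rw [norm_mul, norm_of_nonneg h0, norm_of_nonneg hpow.le]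
    calc (1 - exp (-b * x ^ 2)) * x ^ (-d - 1) ≤ b * x ^ 2 * x ^ (-d - 1) := by
          gcongr; simpa [neg_mul] using one_sub_exp_neg_le_self (b * x ^ 2)
      _ = b * x ^ (1 - d) := by
          rw [mul_assoc, mul_comm (x ^ 2), rpow_mul_sq hx.1.ne']
          ring_nf
  · refine (integrableOn_Ioi_rpow_of_lt (a := -d - 1) (by linarith) one_pos).mono'
      hmeas.restrict ?_
    filter_upwards [ae_restrict_mem measurableSet_Ioi] with x hx
    obtain ⟨h0, h1⟩ := one_sub_exp_neg_mul_sq_mem_Icc hb x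
    have hpow := rpow_pos_of_pos (one_pos.trans hx) (-d - 1)
    rw [norm_mul, norm_of_nonneg h0, norm_of_nonneg hpow.le]
    exact mul_le_of_le_one_left hpow.le h1

lemma hasDerivAt_one_sub_exp_neg_mul_sq (b x : ℝ) :
    HasDerivAt (fun x : ℝ => 1 - exp (-b * x ^ 2)) (2 * b * x * exp (-b * x ^ 2)) x := by
  refine (((hasDerivAt_pow 2 x).const_mul (-b)).exp.const_sub 1).congr_deriv ?_
  ring

lemma hasDerivAt_neg_rpow_neg_div {x : ℝ} (hx : x ≠ 0) (hd : d ≠ 0) :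
    HasDerivAt (fun x : ℝ => -(x ^ (-d) / d)) (x ^ (-d - 1)) x := by
  refine ((hasDerivAt_rpow_const (p := -d) (Or.inl hx)).div_const d).neg.congr_deriv ?_
  field_simp

lemma tendsto_one_sub_exp_neg_mul_sq_mul_rpow_nhdsGT_zero (hb : 0 ≤ b) (hd2 : d < 2) :
    Tendsto (fun x : ℝ => (1 - exp (-b * x ^ 2)) * x ^ (-d)) (𝓝[>] 0) (𝓝 0) := by
  have hlim : Tendsto (fun x : ℝ => b * x ^ (-d + 2)) (𝓝[>] 0) (𝓝 0) := by
    have h := ((continuousAt_rpow_const 0 (-d + 2) (Or.inr (by linarith))).tendsto.const_mul b)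
    rw [zero_rpow (by linarith), mul_zero] at h
    exact h.mono_left nhdsWithin_le_nhds
  refine squeeze_zero' ?_ ?_ hlim
  · filter_upwards [self_mem_nhdsWithin] with x hx
    exact mul_nonneg (one_sub_exp_neg_mul_sq_mem_Icc hb x).1 (rpow_pos_of_pos hx _).le
  · filter_upwards [self_mem_nhdsWithin] with x hx
    calc (1 - exp (-b * x ^ 2)) * x ^ (-d) ≤ b * x ^ 2 * x ^ (-d) := by
          gcongr
          · exact (rpow_pos_of_pos hx _).le
          · simpa [neg_mul] using one_sub_exp_neg_le_self (b * x ^ 2)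
      _ = b * x ^ (-d + 2) := by rw [mul_assoc, mul_comm (x ^ 2), rpow_mul_sq (ne_of_gt hx)]

lemma tendsto_one_sub_exp_neg_mul_sq_mul_rpow_atTop (hb : 0 ≤ b) (hd : 0 < d) :
    Tendsto (fun x : ℝ => (1 - exp (-b * x ^ 2)) * x ^ (-d)) atTop (𝓝 0) := by
  refine squeeze_zero' ?_ ?_ (tendsto_rpow_neg_atTop hd)
  · filter_upwards [eventually_gt_atTop 0] with x hx
    exact mul_nonneg (one_sub_exp_neg_mul_sq_mem_Icc hb x).1 (rpow_pos_of_pos hx _).le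
  · filter_upwards [eventually_gt_atTop 0] with x hx
    exact mul_le_of_le_one_left (rpow_pos_of_pos hx _).le (one_sub_exp_neg_mul_sq_mem_Icc hb x).2

lemma integral_one_sub_exp_neg_mul_sq_mul_rpow (hb : 0 < b) (hd : 0 < d) (hd2 : d < 2) :
    ∫ x in Ioi (0 : ℝ), (1 - exp (-b * x ^ 2)) * x ^ (-d - 1) =
      b ^ (d / 2) * Gamma (1 - d / 2) / d := by
  have hu'v : EqOn (fun x => 2 * b * x * exp (-b * x ^ 2) * -(x ^ (-d) / d))
      (fun x => -(2 * b / d) * (x ^ (1 - d) * exp (-b * x ^ 2))) (Ioi 0) := by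
    intro x hx
    dsimp only
    rw [sub_eq_add_neg, rpow_add hx, rpow_one]
    ring
  have hu'v_int : IntegrableOn (fun x => 2 * b * x * exp (-b * x ^ 2) * -(x ^ (-d) / d)) (Ioi 0) :=
    IntegrableOn.congr_fun ((integrableOn_rpow_mul_exp_neg_mul_sq hb (s := 1 - d)
      (by linarith)).const_mul (-(2 * b / d))) hu'v.symm measurableSet_Ioi
  have hboundary {l : Filter ℝ}
      (h : Tendsto (fun x : ℝ => (1 - exp (-b * x ^ 2)) * x ^ (-d)) l (𝓝 0)) :
      Tendsto (fun x : ℝ => (1 - exp (-b * x ^ 2)) * -(x ^ (-d) / d)) l (𝓝 0) := by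
    simpa [mul_neg, mul_div_assoc] using (h.div_const d).neg
  rw [integral_Ioi_mul_deriv_eq_deriv_mul (fun x _ => hasDerivAt_one_sub_exp_neg_mul_sq b x)
      (fun x hx => hasDerivAt_neg_rpow_neg_div (ne_of_gt hx) hd.ne')
      (integrableOn_one_sub_exp_neg_mul_sq_mul_rpow hb.le hd hd2) hu'v_int
      (hboundary (tendsto_one_sub_exp_neg_mul_sq_mul_rpow_nhdsGT_zero hb.le hd2))
      (hboundary (tendsto_one_sub_exp_neg_mul_sq_mul_rpow_atTop hb.le hd)),
    setIntegral_congr_fun measurableSet_Ioi hu'v, integral_const_mul,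
    integral_rpow_mul_exp_neg_mul_sq hb (by linarith),
    show -(1 - d + 1) / 2 = d / 2 - 1 by ring, show (1 - d + 1) / 2 = 1 - d / 2 by ring,
    rpow_sub_one hb.ne']
  field_simp
  ring

lemma integral_one_sub_exp_neg_mul_sq_div_abs_rpow (hb : 0 < b) (hd : 0 < d) (hd2 : d < 2) :
    ∫ x : ℝ, (1 - exp (-b * x ^ 2)) / |x| ^ (d + 1) =
      2 * b ^ (d / 2) * Gamma (1 - d / 2) / d := by
  have hsymm := integral_comp_abs (f := fun y : ℝ => (1 - exp (-b * y ^ 2)) / y ^ (d + 1))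
  simp only [sq_abs] at hsymm
  rw [hsymm, mul_assoc, mul_div_assoc, ← integral_one_sub_exp_neg_mul_sq_mul_rpow hb hd hd2]
  congr 1
  refine setIntegral_congr_fun measurableSet_Ioi fun x hx => ?_
  rw [show -d - 1 = -(d + 1) by ring, rpow_neg (le_of_lt hx), div_eq_mul_inv]

end

/-- The inverse-power exceedance density `H_d(x) = C_d / |x|^{d+1}` with
`C_d = d 2^{d/2-1} / Γ(1-d/2)` satisfies the unit normalization
`∫ (1 - e^{-x²/2}) H_d(dx) = 1`. -/
theorem inverse_power_exceedance_normalized (d : ℝ) (hd : d ∈ Set.Ioo (0 : ℝ) 2) :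
    ∫ x : ℝ, (1 - Real.exp (-x ^ 2 / 2)) *
      (d * 2 ^ (d / 2 - 1) / Real.Gamma (1 - d / 2) / |x| ^ (d + 1)) = 1 := by
  obtain ⟨hd0, hd2⟩ := hd
  have hΓ : Gamma (1 - d / 2) ≠ 0 := (Gamma_pos_of_pos (by linarith)).ne'
  have hsplit : ∀ x : ℝ, (1 - exp (-x ^ 2 / 2)) *
      (d * 2 ^ (d / 2 - 1) / Gamma (1 - d / 2) / |x| ^ (d + 1))
      = d * 2 ^ (d / 2 - 1) / Gamma (1 - d / 2) *
          ((1 - exp (-(1 / 2) * x ^ 2)) / |x| ^ (d + 1)) := by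
    intro x
    ring_nf
  simp_rw [hsplit]
  rw [integral_const_mul, integral_one_sub_exp_neg_mul_sq_div_abs_rpow one_half_pos hd0 hd2,
    rpow_sub_one two_ne_zero, div_rpow zero_le_one zero_le_two, one_rpow]
  field_simp
end

section
/- For every d ∈ (0,2) and every integer r ≥ 1, ((1·3·5⋯(2r−1))/(2r)!) · ∫_ℝ x^{2r} e^{−x²/2} · C_d/|x|^{1+d} dx = d·(2−d)·(4−d)⋯(2r−2−d)/(2^r · r!), where C_d = d·2^{d/2−1}/Γ(1−d/2). -/
/-!
Off the origin the integrand is `C_d · |x|^(2r-1-d) · e^{-x²/2}`, an absolute Gaussian moment,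
equal to `C_d · 2^(r-d/2) · Γ(r-d/2)`. The functional equation of `Γ` turns
`2^(r-1) Γ(r-d/2) / Γ(1-d/2)` into `(2-d)(4-d)⋯(2r-2-d)`, and `(2r)! = (1·3⋯(2r-1)) · 2^r r!`.
-/

open MeasureTheory Real

theorem Nat.factorial_two_mul_eq_prod_odd_mul (n : ℕ) :
    (2 * n).factorial = (∏ i ∈ Finset.range n, (2 * i + 1)) * (2 ^ n * n.factorial) := by
  induction n with
  | zero => simp
  | succ n ih =>
    rw [show 2 * (n + 1) = 2 * n + 1 + 1 by ring, Nat.factorial_succ, Nat.factorial_succ, ih,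
      Finset.prod_range_succ, Nat.factorial_succ, pow_succ]
    ring

theorem Real.two_pow_mul_Gamma_add_nat {s : ℝ} (hs : 0 < s) (n : ℕ) :
    2 ^ n * Gamma (s + n) = Gamma s * ∏ i ∈ Finset.range n, (2 * s + 2 * i) := by
  induction n with
  | zero => simp
  | succ n ih =>
    rw [Nat.cast_succ, ← add_assoc, Gamma_add_one (by positivity), Finset.prod_range_succ,
      pow_succ, ← mul_assoc (Gamma s), ← ih]
    ring

theorem integral_abs_rpow_mul_exp_neg_mul_sq {q b : ℝ} (hq : -1 < q) (hb : 0 < b) :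
    ∫ x : ℝ, |x| ^ q * exp (-b * x ^ 2) = b ^ (-(q + 1) / 2) * Gamma ((q + 1) / 2) := by
  have h := integral_comp_abs (f := fun y : ℝ => y ^ q * exp (-b * y ^ 2))
  simp only [sq_abs] at h
  rw [h]
  have h2 := integral_rpow_mul_exp_neg_mul_rpow two_pos hq hb
  simp only [rpow_two] at h2
  rw [h2]
  ring

theorem integral_pow_mul_exp_neg_sq_div_two_mul_div_abs_rpow (c d : ℝ) {m : ℕ} (hd : d < 2 * m) :
    ∫ x : ℝ, x ^ (2 * m) * exp (-x ^ 2 / 2) * (c / |x| ^ (1 + d)) =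
      c * (2 ^ (m - d / 2) * Gamma (m - d / 2)) := by
  have hintegrand : ∀ x : ℝ, x ≠ 0 → x ^ (2 * m) * exp (-x ^ 2 / 2) * (c / |x| ^ (1 + d)) =
      c * (|x| ^ (2 * m - 1 - d) * exp (-2⁻¹ * x ^ 2)) := by
    intro x hx
    have hsplit : |x| ^ (2 * m - 1 - d) = |x| ^ ((2 * m : ℕ) : ℝ) / |x| ^ (1 + d) := by
      rw [← rpow_sub (abs_pos.mpr hx)]
      push_cast
      ring_nf
    rw [hsplit, rpow_natCast, (even_two_mul _).pow_abs, neg_div, div_eq_inv_mul, ← neg_mul]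
    ring
  calc _ = ∫ x : ℝ, c * (|x| ^ (2 * m - 1 - d) * exp (-2⁻¹ * x ^ 2)) := by
        refine integral_congr_ae ?_
        filter_upwards [compl_mem_ae_iff.mpr (measure_singleton (0 : ℝ))] with x hx
        exact hintegrand x hx
    _ = c * (2⁻¹ ^ (-(2 * m - 1 - d + 1) / 2) * Gamma ((2 * m - 1 - d + 1) / 2)) := by
        rw [integral_const_mul, integral_abs_rpow_mul_exp_neg_mul_sq (by linarith) (by norm_num)]
    _ = c * (2 ^ (m - d / 2) * Gamma (m - d / 2)) := by
        rw [inv_rpow zero_le_two, ← rpow_neg zero_le_two]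
        ring_nf

/-- For `0 < d < 2` and `r ≥ 1`,
`(1·3·5⋯(2r-1))/(2r)! · ∫ x^{2r} e^{-x²/2} C_d/|x|^{1+d} dx = d(2-d)(4-d)⋯(2r-2-d)/(2^r r!)`. -/
theorem inverse_power_zeta_coefficient (d : ℝ) (hd : d ∈ Set.Ioo (0 : ℝ) 2)
    (r : ℕ) (hr : 1 ≤ r) :
    (∏ i ∈ Finset.range r, (2 * (i : ℝ) + 1)) / (Nat.factorial (2 * r) : ℝ) *
      ∫ x : ℝ, x ^ (2 * r) * Real.exp (-x ^ 2 / 2) *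
        (d * 2 ^ (d / 2 - 1) / Real.Gamma (1 - d / 2) / |x| ^ (1 + d)) =
    (d * ∏ i ∈ Finset.range (r - 1), (2 * ((i : ℝ) + 1) - d)) /
      (2 ^ r * (Nat.factorial r : ℝ)) := by
  obtain ⟨-, hd2⟩ := hd
  obtain ⟨n, rfl⟩ : ∃ n, r = n + 1 := ⟨r - 1, by omega⟩
  have hGamma_pos : 0 < Gamma (1 - d / 2) := Gamma_pos_of_pos (by linarith)
  have hpow : (2 : ℝ) ^ (d / 2 - 1) * 2 ^ (((n + 1 : ℕ) : ℝ) - d / 2) = 2 ^ n := by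
    rw [← rpow_add two_pos, ← rpow_natCast]
    push_cast
    ring_nf
  have hprod : ∏ i ∈ Finset.range n, (2 * ((i : ℝ) + 1) - d) =
      2 ^ n * Gamma (((n + 1 : ℕ) : ℝ) - d / 2) / Gamma (1 - d / 2) := by
    rw [eq_div_iff hGamma_pos.ne', mul_comm,
      show ((n + 1 : ℕ) : ℝ) - d / 2 = 1 - d / 2 + n by push_cast; ring,
      two_pow_mul_Gamma_add_nat (by linarith)]
    exact congrArg _ (Finset.prod_congr rfl fun i _ ↦ by ring)
  rw [integral_pow_mul_exp_neg_sq_div_two_mul_div_abs_rpow _ _ (by push_cast; linarith),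
    Nat.add_sub_cancel, Nat.factorial_two_mul_eq_prod_odd_mul, hprod, ← hpow]
  push_cast
  field_simp
end

section
/- Fix d ∈ (0,2) and set ζ_{d,r} = d·(2−d)·(4−d)⋯(2r−2−d)/(2^r · r!) for integers r ≥ 1. Then for every y ∈ ℝ, ∫_ℝ (cosh(xy) − 1)·e^{−x²/2} · C_d/|x|^{d+1} dx = Σ_{r=1}^∞ ζ_{d,r} · y^{2r}/(1·3·5⋯(2r−1)), with the series on the right convergent, where C_d = d·2^{d/2−1}/Γ(1−d/2). -/
open MeasureTheory Real

/-!
Expand `cosh (x y) - 1 = ∑_{r ≥ 1} (x y)^{2r} / (2r)!`. The terms are nonnegative, so the series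
may be integrated termwise as soon as the termwise integrals are summable. Each of them is an
absolute moment of the Gaussian weight, `∫ |x|^{2r-1-d} e^{-x²/2} dx = 2^{r-d/2} Γ(r - d/2)`, and
`Γ(r - d/2) = Γ(1 - d/2) ∏_{i < r-1} (i + 1 - d/2)` together with `(2r)! = 2^r r! (2r-1)!!` turns
`C_d y^{2r} / (2r)! · 2^{r-d/2} Γ(r - d/2)` into `ζ_{d,r} y^{2r} / (2r-1)!!`. Summability follows
from `0 ≤ ζ_{d,r} ≤ 1` and `(2r-1)!! ≥ r!`.
-/

open Finset Nat

theorem Real.hasSum_cosh_sub_one (z : ℝ) :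
    HasSum (fun r : ℕ => z ^ (2 * (r + 1)) / (2 * (r + 1))!) (cosh z - 1) := by
  simpa using (hasSum_nat_add_iff' 1).mpr (hasSum_cosh z)

theorem hasSum_integral_of_nonneg {α : Type*} [MeasurableSpace α] {μ : Measure α}
    {F : ℕ → α → ℝ} {f : α → ℝ} (hF_int : ∀ n, Integrable (F n) μ)
    (hF_nonneg : ∀ n x, 0 ≤ F n x) (hF_sum : ∀ x, HasSum (F · x) (f x))
    (h_summable : Summable fun n => ∫ x, F n x ∂μ) :
    HasSum (fun n => ∫ x, F n x ∂μ) (∫ x, f x ∂μ) := by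
  have h := hasSum_integral_of_summable_integral_norm hF_int
    (by simpa only [norm_of_nonneg (hF_nonneg _ _)] using h_summable)
  simpa only [(hF_sum _).tsum_eq] using h

theorem integral_abs_rpow_mul_exp_neg_sq_div_two {s : ℝ} (hs : -1 < s) :
    ∫ x : ℝ, |x| ^ s * exp (-x ^ 2 / 2) = 2 ^ ((s + 1) / 2) * Gamma ((s + 1) / 2) := by
  have hsymm : (fun x : ℝ => |x| ^ s * exp (-x ^ 2 / 2)) =
      fun x => (fun t : ℝ => t ^ s * exp (-(1 / 2) * t ^ (2 : ℝ))) |x| := by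
    ext x
    simp only [rpow_two, sq_abs]
    ring_nf
  have h_half : (1 / 2 : ℝ) ^ (-(s + 1) / 2) = 2 ^ ((s + 1) / 2) := by
    rw [one_div, inv_rpow zero_le_two, ← rpow_neg zero_le_two, neg_div, neg_neg]
  rw [hsymm, integral_comp_abs (f := fun t : ℝ => t ^ s * exp (-(1 / 2) * t ^ (2 : ℝ))),
    integral_rpow_mul_exp_neg_mul_rpow two_pos hs one_half_pos, h_half]
  ring

theorem integral_even_pow_mul_exp_neg_sq_div_two_div_abs_rpow (m : ℕ) {p : ℝ}
    (hp : p < 2 * m + 1) :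
    ∫ x : ℝ, x ^ (2 * m) * exp (-x ^ 2 / 2) / |x| ^ p =
      2 ^ ((2 * m + 1 - p) / 2) * Gamma ((2 * m + 1 - p) / 2) := by
  rw [show 2 * (m : ℝ) + 1 - p = 2 * m - p + 1 by ring,
    ← integral_abs_rpow_mul_exp_neg_sq_div_two (by linarith)]
  refine integral_congr_ae ?_
  filter_upwards [Measure.ae_ne volume 0] with x hx
  have hx' : 0 < |x| := abs_pos.mpr hx
  rw [pow_mul, ← sq_abs, ← pow_mul, ← rpow_natCast, rpow_sub hx']
  push_cast
  ring

theorem integrable_even_pow_mul_exp_neg_sq_div_two_div_abs_rpow (m : ℕ) {p : ℝ}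
    (hp : p < 2 * m + 1) :
    Integrable fun x : ℝ => x ^ (2 * m) * exp (-x ^ 2 / 2) / |x| ^ p :=
  .of_integral_ne_zero <| by
    rw [integral_even_pow_mul_exp_neg_sq_div_two_div_abs_rpow m hp]
    exact (mul_pos (by positivity) (Gamma_pos_of_pos (by linarith))).ne'

theorem Real.Gamma_nat_add {a : ℝ} (ha : 0 < a) (r : ℕ) :
    Gamma (r + a) = (∏ i ∈ range r, (i + a)) * Gamma a := by
  induction r with
  | zero => simp
  | succ n ih =>
    rw [prod_range_succ, cast_succ, add_right_comm, Gamma_add_one (by positivity), ih]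
    ring

theorem factorial_two_mul_eq_two_pow_mul_prod_odd (r : ℕ) :
    ((2 * r)! : ℝ) = 2 ^ r * r ! * ∏ i ∈ range r, (2 * (i : ℝ) + 1) := by
  induction r with
  | zero => simp
  | succ n ih =>
    rw [show 2 * (n + 1) = 2 * n + 1 + 1 by ring, factorial_succ, factorial_succ]
    push_cast [ih, prod_range_succ, factorial_succ]
    ring

/-- The constant `C_d` of the inverse-power exceedance density. -/
noncomputable def inversePowerConst (d : ℝ) : ℝ := d * 2 ^ (d / 2 - 1) / Gamma (1 - d / 2)

/-- `ζ_{d, r + 1}`: the index is shifted so that `r : ℕ` runs over the paper's `r + 1 ≥ 1`. -/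
noncomputable def zetaCoeff (d : ℝ) (r : ℕ) : ℝ :=
  (d * ∏ i ∈ range r, (2 * ((i : ℝ) + 1) - d)) / (2 ^ (r + 1) * ((r + 1)! : ℝ))

theorem inversePowerConst_pos {d : ℝ} (hd0 : 0 < d) (hd2 : d < 2) : 0 < inversePowerConst d :=
  div_pos (by positivity) (Gamma_pos_of_pos (by linarith))

theorem prod_two_mul_succ_sub_eq_Gamma {d : ℝ} (hd : d < 2) (r : ℕ) :
    ∏ i ∈ range r, (2 * ((i : ℝ) + 1) - d) =
      2 ^ r * Gamma (r + (1 - d / 2)) / Gamma (1 - d / 2) := by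
  have h_factor : ∀ i ∈ range r, 2 * ((i : ℝ) + 1) - d = 2 * (i + (1 - d / 2)) :=
    fun i _ => by ring
  rw [Gamma_nat_add (by linarith), mul_div_assoc,
    mul_div_cancel_right₀ _ (Gamma_pos_of_pos (by linarith)).ne', prod_congr rfl h_factor,
    prod_mul_distrib, prod_const, card_range]

theorem inversePowerConst_mul_two_rpow_mul_Gamma {d : ℝ} (hd : d < 2) (r : ℕ) :
    inversePowerConst d * (2 ^ ((r : ℝ) + (1 - d / 2)) * Gamma (r + (1 - d / 2))) =
      d * ∏ i ∈ range r, (2 * ((i : ℝ) + 1) - d) := by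
  have hΓ : Gamma (1 - d / 2) ≠ 0 := (Gamma_pos_of_pos (by linarith)).ne'
  have h_two : (2 : ℝ) ^ (d / 2 - 1) * 2 ^ ((r : ℝ) + (1 - d / 2)) = 2 ^ r := by
    rw [← rpow_add two_pos, ← rpow_natCast]
    congr 1
    ring
  rw [prod_two_mul_succ_sub_eq_Gamma hd, inversePowerConst, ← h_two]
  field_simp

theorem zetaCoeff_mul_eq_inversePowerConst_mul {d : ℝ} (hd : d < 2) (r : ℕ) (y : ℝ) :
    zetaCoeff d r * (y ^ (2 * (r + 1)) / ∏ i ∈ range (r + 1), (2 * (i : ℝ) + 1)) =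
      inversePowerConst d * y ^ (2 * (r + 1)) / (2 * (r + 1))! *
        (2 ^ ((r : ℝ) + (1 - d / 2)) * Gamma (r + (1 - d / 2))) := by
  have h_odd : 0 < ∏ i ∈ range (r + 1), (2 * (i : ℝ) + 1) := prod_pos fun i _ => by positivity
  rw [zetaCoeff, ← inversePowerConst_mul_two_rpow_mul_Gamma hd,
    factorial_two_mul_eq_two_pow_mul_prod_odd]
  field_simp

theorem prod_two_mul_succ_sub_nonneg {d : ℝ} (hd : d ≤ 2) (r : ℕ) :
    0 ≤ ∏ i ∈ range r, (2 * ((i : ℝ) + 1) - d) :=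
  prod_nonneg fun i _ => by linarith [i.cast_nonneg (α := ℝ)]

theorem zetaCoeff_nonneg {d : ℝ} (hd0 : 0 ≤ d) (hd2 : d ≤ 2) (r : ℕ) : 0 ≤ zetaCoeff d r :=
  div_nonneg (mul_nonneg hd0 (prod_two_mul_succ_sub_nonneg hd2 r)) (by positivity)

theorem zetaCoeff_le_one {d : ℝ} (hd0 : 0 ≤ d) (hd2 : d ≤ 2) (r : ℕ) : zetaCoeff d r ≤ 1 := by
  have h_prod : ∏ i ∈ range r, (2 * ((i : ℝ) + 1) - d) ≤ 2 ^ r * r ! :=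
    calc ∏ i ∈ range r, (2 * ((i : ℝ) + 1) - d) ≤ ∏ i ∈ range r, (2 * ((i : ℝ) + 1)) :=
          prod_le_prod (fun i _ => by linarith [i.cast_nonneg (α := ℝ)]) fun i _ => by linarith
      _ = 2 ^ r * r ! := by
          rw [prod_mul_distrib, prod_const, card_range]
          exact_mod_cast congrArg (2 ^ r * ·) (prod_range_add_one_eq_factorial r)
  have h_fact : 2 * (2 ^ r * r !) ≤ 2 ^ (r + 1) * (r + 1)! := by
    rw [pow_succ, mul_comm _ 2, mul_assoc]
    gcongr
    exact le_succ r
  rw [zetaCoeff, div_le_one (by positivity)]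
  calc d * ∏ i ∈ range r, (2 * ((i : ℝ) + 1) - d) ≤ 2 * (2 ^ r * r !) :=
        mul_le_mul hd2 h_prod (prod_two_mul_succ_sub_nonneg hd2 r) zero_le_two
    _ ≤ 2 ^ (r + 1) * (r + 1)! := by exact_mod_cast h_fact

theorem summable_zeta_series {d : ℝ} (hd0 : 0 ≤ d) (hd2 : d ≤ 2) (y : ℝ) :
    Summable fun r : ℕ =>
      zetaCoeff d r * (y ^ (2 * (r + 1)) / ∏ i ∈ range (r + 1), (2 * (i : ℝ) + 1)) := by
  have h_odd (n : ℕ) : (n ! : ℝ) ≤ ∏ i ∈ range n, (2 * (i : ℝ) + 1) := by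
    rw [← prod_range_add_one_eq_factorial]
    push_cast
    exact prod_le_prod (fun i _ => by positivity) fun i _ => by linarith [i.cast_nonneg (α := ℝ)]
  simp only [pow_mul]
  refine .of_nonneg_of_le (fun r => ?_) (fun r => ?_)
    ((summable_nat_add_iff 1).mpr (summable_pow_div_factorial (y ^ 2)))
  · have := zetaCoeff_nonneg hd0 hd2 r
    positivity
  · calc _ ≤ (y ^ 2) ^ (r + 1) / ∏ i ∈ range (r + 1), (2 * (i : ℝ) + 1) :=
          mul_le_of_le_one_left (by positivity) (zetaCoeff_le_one hd0 hd2 r)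
      _ ≤ (y ^ 2) ^ (r + 1) / (r + 1)! :=
          div_le_div_of_nonneg_left (by positivity) (by positivity) (h_odd _)

/-- The zeta function of the inverse-power exceedance measure `H_d` is the convergent
power series `ζ(y) = Σ_{r≥1} ζ_{d,r} y^{2r} / (1·3⋯(2r-1))` with
`ζ_{d,r} = d(2-d)⋯(2r-2-d)/(2^r r!)`.  (The sum below is indexed by `r ∈ ℕ`,
corresponding to the term of index `r + 1 ≥ 1`.) -/
theorem inverse_power_zeta_series (d : ℝ) (hd : d ∈ Set.Ioo (0 : ℝ) 2) (y : ℝ) :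
    HasSum
      (fun r : ℕ =>
        (d * ∏ i ∈ Finset.range r, (2 * ((i : ℝ) + 1) - d)) /
            (2 ^ (r + 1) * (Nat.factorial (r + 1) : ℝ)) *
          (y ^ (2 * (r + 1)) / ∏ i ∈ Finset.range (r + 1), (2 * (i : ℝ) + 1)))
      (∫ x : ℝ, (Real.cosh (x * y) - 1) * Real.exp (-x ^ 2 / 2) *
        (d * 2 ^ (d / 2 - 1) / Real.Gamma (1 - d / 2) / |x| ^ (d + 1))) := by
  obtain ⟨hd0, hd2⟩ := hd
  set F : ℕ → ℝ → ℝ := fun r x => inversePowerConst d * y ^ (2 * (r + 1)) / (2 * (r + 1))! *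
    (x ^ (2 * (r + 1)) * exp (-x ^ 2 / 2) / |x| ^ (d + 1))
  have hp (r : ℕ) : d + 1 < 2 * ((r + 1 : ℕ) : ℝ) + 1 := by
    push_cast
    linarith [r.cast_nonneg (α := ℝ)]
  have hF_integral (r : ℕ) : ∫ x, F r x =
      zetaCoeff d r * (y ^ (2 * (r + 1)) / ∏ i ∈ range (r + 1), (2 * (i : ℝ) + 1)) := by
    have h_exponent : (2 * ((r + 1 : ℕ) : ℝ) + 1 - (d + 1)) / 2 = r + (1 - d / 2) := by
      push_cast
      ring
    rw [integral_const_mul, integral_even_pow_mul_exp_neg_sq_div_two_div_abs_rpow _ (hp r),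
      h_exponent, zetaCoeff_mul_eq_inversePowerConst_mul hd2]
  refine funext hF_integral ▸ hasSum_integral_of_nonneg
    (fun r => (integrable_even_pow_mul_exp_neg_sq_div_two_div_abs_rpow _ (hp r)).const_mul _)
    (fun r x => ?_) (fun x => ?_) (funext hF_integral ▸ summable_zeta_series hd0.le hd2.le y)
  · have := inversePowerConst_pos hd0 hd2
    have := (even_two_mul (r + 1)).pow_nonneg y
    have := (even_two_mul (r + 1)).pow_nonneg x
    positivity
  · have h_integrand : (cosh (x * y) - 1) * exp (-x ^ 2 / 2) *
        (d * 2 ^ (d / 2 - 1) / Gamma (1 - d / 2) / |x| ^ (d + 1)) =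
        (cosh (x * y) - 1) * (exp (-x ^ 2 / 2) * (inversePowerConst d / |x| ^ (d + 1))) := by
      rw [inversePowerConst]
      ring
    rw [h_integrand]
    refine ((hasSum_cosh_sub_one (x * y)).mul_right _).congr_fun fun r => ?_
    simp only [F, mul_pow]
    ring
end

section
/- Fix d ∈ (0,2) and let ζ(y) = ∫_ℝ (cosh(xy) − 1)·e^{−x²/2} · C_d/|x|^{d+1} dx with C_d = d·2^{d/2−1}/Γ(1−d/2). Then ∫_ℝ φ(y)·ζ(y) dy = 1, where φ(y) = e^{−y²/2}/√(2π) is the standard Gaussian density. In particular ψ(y) = φ(y)·ζ(y) is a probability density on ℝ. -/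
/-!
Integrating in `y` first (Fubini), the moment generating function of the standard Gaussian gives
`∫ φ(y) (cosh (x y) - 1) dy = e^{x²/2} - 1`, so the double integral collapses to
`∫ (1 - e^{-x²/2}) H_d(dx)`, which is `1` by the choice of `C_d`. That normalisation comes from one
integration by parts against `x ^ (-d-1)`:
`∫₀^∞ (1 - e^{-x²/2}) x^{-d-1} dx = d⁻¹ ∫₀^∞ x^{1-d} e^{-x²/2} dx = 2^{-d/2} Γ(1 - d/2) / d`.
-/

open MeasureTheory ProbabilityTheory Real Set Filter Topology
open scoped NNReal

lemma one_sub_exp_neg_sq_div_two_nonneg (x : ℝ) : 0 ≤ 1 - exp (-x ^ 2 / 2) :=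
  sub_nonneg.2 <| exp_le_one_iff.2 <| div_nonpos_of_nonpos_of_nonneg (by nlinarith) zero_le_two

lemma one_sub_exp_neg_sq_div_two_le (x : ℝ) : 1 - exp (-x ^ 2 / 2) ≤ x ^ 2 / 2 := by
  rw [neg_div]
  linarith [one_sub_le_exp_neg (x ^ 2 / 2)]

namespace ProbabilityTheory

lemma integrable_cosh_mul_gaussianReal (μ : ℝ) (v : ℝ≥0) (a : ℝ) :
    Integrable (fun y => cosh (a * y)) (gaussianReal μ v) := by
  simp_rw [cosh_eq, ← neg_mul]
  exact ((integrable_exp_mul_gaussianReal a).add (integrable_exp_mul_gaussianReal (-a))).div_const 2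

lemma integral_cosh_mul_gaussianReal (μ : ℝ) (v : ℝ≥0) (a : ℝ) :
    ∫ y, cosh (a * y) ∂gaussianReal μ v = exp (v * a ^ 2 / 2) * cosh (μ * a) := by
  have hmgf (t : ℝ) : ∫ y, exp (t * y) ∂gaussianReal μ v = exp (μ * t + v * t ^ 2 / 2) :=
    congrFun (mgf_fun_id_gaussianReal (μ := μ) (v := v)) t
  simp_rw [cosh_eq, ← neg_mul]
  rw [integral_div, integral_add (integrable_exp_mul_gaussianReal a)
    (integrable_exp_mul_gaussianReal (-a)), hmgf, hmgf]
  simp only [neg_sq, exp_add, mul_neg, neg_mul]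
  ring

lemma integral_cosh_mul_sub_one_gaussianReal (a : ℝ) :
    ∫ y, (cosh (a * y) - 1) ∂gaussianReal 0 1 = exp (a ^ 2 / 2) - 1 := by
  rw [integral_sub (integrable_cosh_mul_gaussianReal 0 1 a) (integrable_const 1),
    integral_cosh_mul_gaussianReal]
  simp

lemma integral_gaussianReal_zero_one_eq_integral_mul (f : ℝ → ℝ) :
    ∫ y, f y ∂gaussianReal 0 1 = ∫ y, exp (-y ^ 2 / 2) / √(2 * π) * f y := by
  rw [integral_gaussianReal_eq_integral_smul one_ne_zero]
  congr with y
  simp [gaussianPDFReal, div_eq_inv_mul]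

theorem integral_gaussianReal_integral_cosh_sub_one {w : ℝ → ℝ} (hw : Measurable w)
    (hint : Integrable fun x => (1 - exp (-x ^ 2 / 2)) * w x) :
    ∫ y, (∫ x, (cosh (x * y) - 1) * exp (-x ^ 2 / 2) * w x) ∂gaussianReal 0 1
      = ∫ x, (1 - exp (-x ^ 2 / 2)) * w x := by
  set F : ℝ → ℝ → ℝ := fun x y => (cosh (x * y) - 1) * exp (-x ^ 2 / 2) * w x
  have hinner (x c : ℝ) :
      ∫ y, (cosh (x * y) - 1) * exp (-x ^ 2 / 2) * c ∂gaussianReal 0 1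
        = (1 - exp (-x ^ 2 / 2)) * c := by
    rw [integral_mul_const, integral_mul_const, integral_cosh_mul_sub_one_gaussianReal, sub_mul,
      ← exp_add, neg_div, add_neg_cancel, exp_zero]
    ring
  have hnorm (x y : ℝ) : ‖F x y‖ = (cosh (x * y) - 1) * exp (-x ^ 2 / 2) * |w x| := by
    simp only [F, norm_mul, norm_eq_abs, abs_exp,
      abs_of_nonneg (sub_nonneg.2 (one_le_cosh (x * y)))]
  have hF : Integrable (Function.uncurry F) (volume.prod (gaussianReal 0 1)) := by
    refine (integrable_prod_iff (by fun_prop)).2 ⟨.of_forall fun x => ?_, ?_⟩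
    · exact (((integrable_cosh_mul_gaussianReal 0 1 x).sub (integrable_const 1)).mul_const
        (exp (-x ^ 2 / 2))).mul_const (w x)
    · simp_rw [Function.uncurry_apply_pair, hnorm, hinner]
      refine hint.norm.congr (.of_forall fun x => ?_)
      simp [abs_of_nonneg (one_sub_exp_neg_sq_div_two_nonneg x)]
  rw [← integral_integral_swap hF]
  simp_rw [F, hinner]

end ProbabilityTheory

lemma integrableOn_Ioi_rpow_mul_exp_neg_sq_div_two {s : ℝ} (hs : -1 < s) :
    IntegrableOn (fun x : ℝ => x ^ s * exp (-x ^ 2 / 2)) (Ioi 0) :=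
  (integrableOn_rpow_mul_exp_neg_mul_sq one_half_pos hs).congr_fun
    (fun x _ => by simp only [neg_mul, one_div_mul_eq_div, neg_div]) measurableSet_Ioi

lemma integral_Ioi_rpow_mul_exp_neg_sq_div_two {s : ℝ} (hs : -1 < s) :
    ∫ x in Ioi (0 : ℝ), x ^ s * exp (-x ^ 2 / 2) = 2 ^ ((s - 1) / 2) * Gamma ((s + 1) / 2) := by
  convert integral_rpow_mul_exp_neg_mul_rpow (p := 2) (b := 1 / 2) two_pos hs one_half_pos
    using 1
  · simp_rw [rpow_two, neg_div, neg_mul, one_div_mul_eq_div]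
  · rw [one_div, inv_rpow zero_le_two, ← rpow_neg zero_le_two, neg_div, neg_neg,
      ← div_eq_mul_inv, ← rpow_sub_one two_ne_zero]
    ring_nf

lemma integrableOn_Ioi_one_sub_exp_neg_sq_div_two_div_rpow {d : ℝ} (hd0 : 0 < d) (hd2 : d < 2) :
    IntegrableOn (fun x => (1 - exp (-x ^ 2 / 2)) / x ^ (d + 1)) (Ioi 0) := by
  have hmeas : AEStronglyMeasurable (fun x : ℝ => (1 - exp (-x ^ 2 / 2)) / x ^ (d + 1)) :=
    (by fun_prop : Measurable _).aestronglyMeasurable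
  have hnn {x : ℝ} (hx : 0 < x) : 0 ≤ (1 - exp (-x ^ 2 / 2)) / x ^ (d + 1) :=
    div_nonneg (one_sub_exp_neg_sq_div_two_nonneg x) (rpow_nonneg hx.le _)
  have hnear : IntegrableOn (fun x => (1 - exp (-x ^ 2 / 2)) / x ^ (d + 1)) (Ioc 0 1) := by
    have hdom : IntegrableOn (fun x : ℝ => x ^ (1 - d)) (Ioc 0 1) :=
      (intervalIntegral.intervalIntegrable_rpow' (by linarith)).1
    refine hdom.mono' hmeas.restrict ((ae_restrict_mem measurableSet_Ioc).mono fun x hx => ?_)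
    rw [norm_of_nonneg (hnn hx.1), div_le_iff₀ (rpow_pos_of_pos hx.1 _), ← rpow_add hx.1,
      show 1 - d + (d + 1) = (2 : ℝ) by ring, rpow_two]
    linarith [one_sub_exp_neg_sq_div_two_le x, sq_nonneg x]
  have hfar : IntegrableOn (fun x => (1 - exp (-x ^ 2 / 2)) / x ^ (d + 1)) (Ioi 1) := by
    have hdom : IntegrableOn (fun x : ℝ => x ^ (-(d + 1))) (Ioi 1) :=
      integrableOn_Ioi_rpow_of_lt (by linarith) one_pos
    refine hdom.mono' hmeas.restrict ((ae_restrict_mem measurableSet_Ioi).mono fun x hx => ?_)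
    have hx0 : (0 : ℝ) < x := one_pos.trans hx
    rw [norm_of_nonneg (hnn hx0), rpow_neg hx0.le, ← one_div]
    gcongr
    linarith [exp_pos (-x ^ 2 / 2)]
  rw [← Ioc_union_Ioi_eq_Ioi zero_le_one]
  exact hnear.union hfar

lemma tendsto_one_sub_exp_neg_sq_div_two_mul_rpow_nhdsGT_zero {d : ℝ} (hd2 : d < 2) :
    Tendsto (fun x : ℝ => (1 - exp (-x ^ 2 / 2)) * x ^ (-d)) (𝓝[>] 0) (𝓝 0) := by
  have hbound : Tendsto (fun x : ℝ => x ^ (2 - d)) (𝓝[>] 0) (𝓝 0) := by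
    have := (continuous_rpow_const (by linarith : (0 : ℝ) ≤ 2 - d)).tendsto 0
    rw [zero_rpow (by linarith)] at this
    exact this.mono_left nhdsWithin_le_nhds
  refine squeeze_zero_norm' ?_ hbound
  filter_upwards [self_mem_nhdsWithin] with x (hx : 0 < x)
  calc ‖(1 - exp (-x ^ 2 / 2)) * x ^ (-d)‖ = (1 - exp (-x ^ 2 / 2)) * x ^ (-d) :=
        norm_of_nonneg (mul_nonneg (one_sub_exp_neg_sq_div_two_nonneg x) (rpow_nonneg hx.le _))
    _ ≤ x ^ 2 * x ^ (-d) := by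
        gcongr
        linarith [one_sub_exp_neg_sq_div_two_le x, sq_nonneg x]
    _ = x ^ (2 - d) := by rw [sub_eq_add_neg, rpow_add hx, rpow_two]

lemma tendsto_one_sub_exp_neg_sq_div_two_mul_rpow_atTop {d : ℝ} (hd0 : 0 < d) :
    Tendsto (fun x : ℝ => (1 - exp (-x ^ 2 / 2)) * x ^ (-d)) atTop (𝓝 0) := by
  have hsq : Tendsto (fun x : ℝ => -x ^ 2 / 2) atTop atBot :=
    (tendsto_neg_atTop_atBot.comp (tendsto_pow_atTop two_ne_zero)).atBot_div_const two_pos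
  have hu : Tendsto (fun x : ℝ => 1 - exp (-x ^ 2 / 2)) atTop (𝓝 1) := by
    simpa using (tendsto_exp_atBot.comp hsq).const_sub 1
  simpa using hu.mul (tendsto_rpow_neg_atTop hd0)

lemma integral_Ioi_one_sub_exp_neg_sq_div_two_div_rpow {d : ℝ} (hd0 : 0 < d) (hd2 : d < 2) :
    ∫ x in Ioi (0 : ℝ), (1 - exp (-x ^ 2 / 2)) / x ^ (d + 1)
      = 2 ^ (-d / 2) * Gamma (1 - d / 2) / d := by
  set u : ℝ → ℝ := fun x => 1 - exp (-x ^ 2 / 2)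
  set v : ℝ → ℝ := fun x => -(x ^ (-d) / d)
  have hu (x : ℝ) : HasDerivAt u (x * exp (-x ^ 2 / 2)) x := by
    refine ((((hasDerivAt_pow 2 x).neg.div_const 2).exp).const_sub 1).congr_deriv ?_
    simp only [Pi.neg_apply, Nat.cast_ofNat]
    ring
  have hv (x : ℝ) (hx : x ∈ Ioi 0) : HasDerivAt v (x ^ (-d - 1)) x := by
    refine (((hasDerivAt_rpow_const (Or.inl (ne_of_gt hx))).div_const d).neg).congr_deriv ?_
    field_simp
  have huv' : EqOn (fun x => (1 - exp (-x ^ 2 / 2)) / x ^ (d + 1)) (fun x => u x * x ^ (-d - 1))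
      (Ioi 0) := by
    intro x hx
    simp only [u, div_eq_mul_inv, ← rpow_neg (le_of_lt hx), neg_add']
  have hu'v : EqOn (fun x => x * exp (-x ^ 2 / 2) * v x)
      (fun x => -(1 / d) * (x ^ (1 - d) * exp (-x ^ 2 / 2))) (Ioi 0) := by
    intro x hx
    simp only [v, sub_eq_add_neg, rpow_add hx, rpow_one]
    ring
  have huv : u * v = fun x => -(1 / d) * ((1 - exp (-x ^ 2 / 2)) * x ^ (-d)) := by
    ext x
    simp only [u, v, Pi.mul_apply]
    ring
  have hzero : Tendsto (u * v) (𝓝[>] 0) (𝓝 0) := by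
    rw [huv]
    simpa only [mul_zero] using
      (tendsto_one_sub_exp_neg_sq_div_two_mul_rpow_nhdsGT_zero hd2).const_mul (-(1 / d))
  have hinfty : Tendsto (u * v) atTop (𝓝 0) := by
    rw [huv]
    simpa only [mul_zero] using
      (tendsto_one_sub_exp_neg_sq_div_two_mul_rpow_atTop hd0).const_mul (-(1 / d))
  rw [setIntegral_congr_fun measurableSet_Ioi huv',
    integral_Ioi_mul_deriv_eq_deriv_mul (fun x _ => hu x) hv
      ((integrableOn_Ioi_one_sub_exp_neg_sq_div_two_div_rpow hd0 hd2).congr_fun huv'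
        measurableSet_Ioi)
      (IntegrableOn.congr_fun
        ((integrableOn_Ioi_rpow_mul_exp_neg_sq_div_two (by linarith)).const_mul _) hu'v.symm
        measurableSet_Ioi) hzero hinfty,
    setIntegral_congr_fun measurableSet_Ioi hu'v, integral_const_mul,
    integral_Ioi_rpow_mul_exp_neg_sq_div_two (by linarith)]
  ring_nf

lemma integrable_comp_abs {f : ℝ → ℝ} (hf : IntegrableOn f (Ioi 0)) :
    Integrable fun x => f |x| := by
  have hIoi : IntegrableOn (fun x => f |x|) (Ioi 0) :=
    hf.congr_fun (fun x hx => by rw [abs_of_pos hx]) measurableSet_Ioi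
  have hIic : IntegrableOn (fun x => f |x|) (Iic 0) := by
    have hneg : MeasurableEmbedding fun x : ℝ => -x := (Homeomorph.neg ℝ).measurableEmbedding
    rw [← Measure.map_neg_eq_self (volume : Measure ℝ), hneg.integrableOn_map_iff]
    simp_rw [Function.comp_def, abs_neg, neg_preimage, neg_Iic, neg_zero]
    exact Iff.mpr integrableOn_Ici_iff_integrableOn_Ioi hIoi
  rw [← integrableOn_univ, ← Iic_union_Ioi (a := (0 : ℝ))]
  exact hIic.union hIoi

lemma integrable_one_sub_exp_neg_sq_div_two_div_abs_rpow {d : ℝ} (hd0 : 0 < d) (hd2 : d < 2) :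
    Integrable fun x : ℝ => (1 - exp (-x ^ 2 / 2)) / |x| ^ (d + 1) := by
  simpa only [sq_abs] using
    integrable_comp_abs (integrableOn_Ioi_one_sub_exp_neg_sq_div_two_div_rpow hd0 hd2)

lemma integral_one_sub_exp_neg_sq_div_two_div_abs_rpow {d : ℝ} (hd0 : 0 < d) (hd2 : d < 2) :
    ∫ x, (1 - exp (-x ^ 2 / 2)) / |x| ^ (d + 1) = 2 ^ (1 - d / 2) * Gamma (1 - d / 2) / d := by
  have h := integral_comp_abs (f := fun x => (1 - exp (-x ^ 2 / 2)) / x ^ (d + 1))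
  simp only [sq_abs] at h
  rw [h, integral_Ioi_one_sub_exp_neg_sq_div_two_div_rpow hd0 hd2, sub_eq_add_neg,
    rpow_add two_pos, rpow_one, neg_div]
  ring

/-- For `0 < d < 2`, the zeta function `ζ` of the inverse-power exceedance measure `H_d`
satisfies `∫ φ(y) ζ(y) dy = 1`, where `φ` is the standard Gaussian density; hence
`ψ = φ·ζ` is a probability density. -/
theorem gaussian_zeta_integral_one (d : ℝ) (hd : d ∈ Set.Ioo (0 : ℝ) 2) :
    ∫ y : ℝ, (Real.exp (-y ^ 2 / 2) / Real.sqrt (2 * π)) *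
      ∫ x : ℝ, (Real.cosh (x * y) - 1) * Real.exp (-x ^ 2 / 2) *
        (d * 2 ^ (d / 2 - 1) / Real.Gamma (1 - d / 2) / |x| ^ (d + 1)) = 1 := by
  obtain ⟨hd0, hd2⟩ := hd
  set C := d * 2 ^ (d / 2 - 1) / Gamma (1 - d / 2)
  have hC (x : ℝ) : (1 - exp (-x ^ 2 / 2)) * (C / |x| ^ (d + 1))
      = C * ((1 - exp (-x ^ 2 / 2)) / |x| ^ (d + 1)) := mul_div_left_comm _ _ _
  have hint : Integrable fun x => (1 - exp (-x ^ 2 / 2)) * (C / |x| ^ (d + 1)) := by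
    simp_rw [hC]
    exact (integrable_one_sub_exp_neg_sq_div_two_div_abs_rpow hd0 hd2).const_mul C
  rw [← integral_gaussianReal_zero_one_eq_integral_mul,
    integral_gaussianReal_integral_cosh_sub_one (by fun_prop) hint]
  simp_rw [hC]
  rw [integral_const_mul, integral_one_sub_exp_neg_sq_div_two_div_abs_rpow hd0 hd2]
  have hΓ : Gamma (1 - d / 2) ≠ 0 := (Gamma_pos_of_pos (by linarith)).ne'
  calc C * (2 ^ (1 - d / 2) * Gamma (1 - d / 2) / d)
      = 2 ^ (d / 2 - 1 + (1 - d / 2)) * (d / d) * (Gamma (1 - d / 2) / Gamma (1 - d / 2)) := by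
        rw [rpow_add two_pos]; ring
    _ = 1 := by rw [div_self hd0.ne', div_self hΓ]; norm_num
end

section
/- Fix d ∈ (0,2) and let H_d(x) = C_d/|x|^{d+1} with C_d = d·2^{d/2−1}/Γ(1−d/2), and ζ(y) = ∫_ℝ (cosh(xy) − 1)·e^{−x²/2} H_d(x) dx. Let (P_n) be a sequence of symmetric Borel probability measures on ℝ and (ρ_n) positive reals with ρ_n → 0, such that for every bounded continuous w : ℝ → ℝ with w(x) = O(x²) as x → 0, one has ρ_n^{−1} ∫ w dP_n → ∫ w(x) H_d(x) dx. Then for every y ∈ ℝ, ρ_n^{−1} · ( ∫_ℝ φ(y − x) P_n(dx) − φ(y)·∫_ℝ e^{−x²/2} P_n(dx) ) → φ(y)·ζ(y), where φ(y) = e^{−y²/2}/√(2π). -/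
open MeasureTheory Filter Real Topology Asymptotics

lemma cosh_sub_one_le_aux {t : ℝ} (ht : |t| ≤ 1) : |Real.cosh t - 1| ≤ t ^ 2 := by
  have h1 := Real.exp_bound ht (n := 2) (by norm_num)
  have h2 := Real.exp_bound (x := -t) (by simpa using ht) (n := 2) (by norm_num)
  simp only [Finset.sum_range_succ, Finset.sum_range_zero] at h1 h2
  norm_num at h1 h2
  have hc : Real.cosh t - 1 = ((Real.exp t - (1 + t)) + (Real.exp (-t) - (1 + -t))) / 2 := by
    rw [Real.cosh_eq]; ring
  rw [hc]
  calc |((Real.exp t - (1 + t)) + (Real.exp (-t) - (1 + -t))) / 2|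
      ≤ (|Real.exp t - (1 + t)| + |Real.exp (-t) - (1 + -t)|) / 2 := by
        rw [abs_div, abs_two]; gcongr; exact abs_add_le _ _
    _ ≤ (t^2 * (3/4) + t^2 * (3/4)) / 2 := by gcongr
    _ ≤ t ^ 2 := by nlinarith [sq_nonneg t]

lemma integrable_of_bdd_aux {μ : Measure ℝ} [IsProbabilityMeasure μ] {f : ℝ → ℝ}
    (hf : Continuous f) {C : ℝ} (h : ∀ x, |f x| ≤ C) : Integrable f μ :=
  (integrable_const C).mono' hf.aestronglyMeasurable (ae_of_all _ fun x => by simpa using h x)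

lemma exp_mul_le_aux (y x : ℝ) :
    Real.exp (x * y) * Real.exp (-x ^ 2 / 2) ≤ Real.exp (y ^ 2 / 2) := by
  rw [← Real.exp_add, Real.exp_le_exp]
  nlinarith [sq_nonneg (x - y)]

lemma exp_neg_mul_le_aux (y x : ℝ) :
    Real.exp (-(x * y)) * Real.exp (-x ^ 2 / 2) ≤ Real.exp (y ^ 2 / 2) := by
  rw [← Real.exp_add, Real.exp_le_exp]
  nlinarith [sq_nonneg (x + y)]

lemma cosh_mul_exp_le_aux (y x : ℝ) :
    Real.cosh (x * y) * Real.exp (-x ^ 2 / 2) ≤ Real.exp (y ^ 2 / 2) := by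
  rw [Real.cosh_eq]
  have h1 := exp_mul_le_aux y x
  have h2 := exp_neg_mul_le_aux y x
  nlinarith

/-- Sparse signal plus standard Gaussian noise: if `(P_n)` is sparse with rate `ρ_n → 0`
and inverse-power exceedance density `H_d`, then for every `y`,
`ρ_n⁻¹ (∫ φ(y-x) P_n(dx) - φ(y) ∫ e^{-x²/2} P_n(dx)) → φ(y) ζ(y)`,
where `ζ` is the zeta function of `H_d`. -/
theorem sparse_convolution_limit (d : ℝ) (hd : d ∈ Set.Ioo (0 : ℝ) 2)
    (P : ℕ → Measure ℝ) (hP : ∀ n, IsProbabilityMeasure (P n))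
    (hsym : ∀ n, (P n).map (fun x => -x) = P n)
    (ρ : ℕ → ℝ) (hρpos : ∀ n, 0 < ρ n) (hρ0 : Tendsto ρ atTop (𝓝 0))
    (hsparse : ∀ w : ℝ → ℝ, Continuous w → (∃ M : ℝ, ∀ x, |w x| ≤ M) →
      (w =O[𝓝 (0 : ℝ)] fun x => x ^ 2) →
      Tendsto (fun n => (ρ n)⁻¹ * ∫ x, w x ∂(P n)) atTop
        (𝓝 (∫ x : ℝ, w x * (d * 2 ^ (d / 2 - 1) / Real.Gamma (1 - d / 2) / |x| ^ (d + 1)))))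
    (y : ℝ) :
    Tendsto
      (fun n => (ρ n)⁻¹ *
        ((∫ x, Real.exp (-(y - x) ^ 2 / 2) / Real.sqrt (2 * π) ∂(P n)) -
          (Real.exp (-y ^ 2 / 2) / Real.sqrt (2 * π)) *
            ∫ x, Real.exp (-x ^ 2 / 2) ∂(P n)))
      atTop
      (𝓝 ((Real.exp (-y ^ 2 / 2) / Real.sqrt (2 * π)) *
        ∫ x : ℝ, (Real.cosh (x * y) - 1) * Real.exp (-x ^ 2 / 2) *
          (d * 2 ^ (d / 2 - 1) / Real.Gamma (1 - d / 2) / |x| ^ (d + 1)))) := by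
  have hexp_pos : ∀ x : ℝ, 0 < Real.exp (-x ^ 2 / 2) := fun x => Real.exp_pos _
  have hexp_le_one : ∀ x : ℝ, Real.exp (-x ^ 2 / 2) ≤ 1 := fun x =>
    Real.exp_le_one_iff.mpr (by nlinarith [sq_nonneg x])
  set w : ℝ → ℝ := fun x => (Real.cosh (x * y) - 1) * Real.exp (-x ^ 2 / 2) with hw
  -- continuity
  have hwc : Continuous w := by
    apply Continuous.mul
    · exact (Real.continuous_cosh.comp (continuous_id.mul continuous_const)).sub continuous_const
    · exact Real.continuous_exp.comp (by fun_prop)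
  -- boundedness
  have hwb : ∀ x, |w x| ≤ Real.exp (y ^ 2 / 2) + 1 := by
    intro x
    have h1 : (1 : ℝ) ≤ Real.cosh (x * y) := Real.one_le_cosh _
    have h2 := cosh_mul_exp_le_aux y x
    have h3 := hexp_le_one x
    have h4 := (hexp_pos x).le
    rw [hw, abs_of_nonneg (by nlinarith)]
    nlinarith
  -- big-O at 0
  have hwO : w =O[𝓝 (0 : ℝ)] fun x => x ^ 2 := by
    rw [isBigO_iff]
    refine ⟨y ^ 2, ?_⟩
    have hy1 : (0 : ℝ) < |y| + 1 := by positivity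
    filter_upwards [Metric.ball_mem_nhds (0 : ℝ) (inv_pos.mpr hy1)] with x hx
    have hx' : |x| ≤ (|y| + 1)⁻¹ := by
      rw [Metric.mem_ball, Real.dist_eq, sub_zero] at hx; exact hx.le
    have hxy : |x * y| ≤ 1 := by
      rw [abs_mul]
      calc |x| * |y| ≤ (|y| + 1)⁻¹ * (|y| + 1) := by
            exact mul_le_mul hx' (by linarith) (abs_nonneg y) (by positivity)
        _ = 1 := inv_mul_cancel₀ hy1.ne'
    have hb := cosh_sub_one_le_aux hxy
    have h3 := hexp_le_one x
    have h4 := (hexp_pos x).le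
    have habs : |Real.cosh (x * y) - 1| * Real.exp (-x ^ 2 / 2) ≤ (x * y) ^ 2 := by
      calc |Real.cosh (x * y) - 1| * Real.exp (-x ^ 2 / 2) ≤ (x * y) ^ 2 * 1 := by
            gcongr
          _ = (x * y) ^ 2 := mul_one _
    calc ‖w x‖ = |Real.cosh (x * y) - 1| * Real.exp (-x ^ 2 / 2) := by
          rw [hw, Real.norm_eq_abs, abs_mul, abs_of_pos (hexp_pos x)]
      _ ≤ (x * y) ^ 2 := habs
      _ = y ^ 2 * x ^ 2 := by ring
      _ ≤ y ^ 2 * ‖x ^ 2‖ := by rw [Real.norm_eq_abs, abs_of_nonneg (sq_nonneg x)]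
  have key := (hsparse w hwc ⟨Real.exp (y ^ 2 / 2) + 1, hwb⟩ hwO).const_mul
    (Real.exp (-y ^ 2 / 2) / Real.sqrt (2 * π))
  -- rewrite each term of the sequence
  have heq : ∀ n, (ρ n)⁻¹ *
      ((∫ x, Real.exp (-(y - x) ^ 2 / 2) / Real.sqrt (2 * π) ∂(P n)) -
        (Real.exp (-y ^ 2 / 2) / Real.sqrt (2 * π)) * ∫ x, Real.exp (-x ^ 2 / 2) ∂(P n)) =
      (Real.exp (-y ^ 2 / 2) / Real.sqrt (2 * π)) * ((ρ n)⁻¹ * ∫ x, w x ∂(P n)) := by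
    intro n
    haveI := hP n
    -- integrability facts
    have hint_pos : Integrable (fun x => Real.exp (x * y) * Real.exp (-x ^ 2 / 2)) (P n) := by
      apply integrable_of_bdd_aux (by fun_prop)
      intro x
      rw [abs_of_pos (by positivity)]
      exact exp_mul_le_aux y x
    have hint_neg : Integrable (fun x => Real.exp (-(x * y)) * Real.exp (-x ^ 2 / 2)) (P n) := by
      apply integrable_of_bdd_aux (by fun_prop)
      intro x
      rw [abs_of_pos (by positivity)]
      exact exp_neg_mul_le_aux y x
    have hint_cosh : Integrable (fun x => Real.cosh (x * y) * Real.exp (-x ^ 2 / 2)) (P n) := by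
      apply integrable_of_bdd_aux (by fun_prop)
      intro x
      rw [abs_of_pos (mul_pos (Real.cosh_pos _) (hexp_pos x))]
      exact cosh_mul_exp_le_aux y x
    have hint_exp : Integrable (fun x => Real.exp (-x ^ 2 / 2)) (P n) := by
      apply integrable_of_bdd_aux (by fun_prop)
      intro x
      rw [abs_of_pos (hexp_pos x)]
      exact hexp_le_one x
    -- symmetry
    have hneg : (∫ x, Real.exp (x * y) * Real.exp (-x ^ 2 / 2) ∂(P n)) =
        ∫ x, Real.exp (-(x * y)) * Real.exp (-x ^ 2 / 2) ∂(P n) := by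
      conv_lhs => rw [← hsym n]
      rw [integral_map measurable_neg.aemeasurable
        (Continuous.aestronglyMeasurable (by fun_prop))]
      simp [neg_mul]
    -- cosh integral
    have hcosh : (∫ x, Real.cosh (x * y) * Real.exp (-x ^ 2 / 2) ∂(P n)) =
        ∫ x, Real.exp (x * y) * Real.exp (-x ^ 2 / 2) ∂(P n) := by
      have e1 : ∀ x : ℝ, Real.cosh (x * y) * Real.exp (-x ^ 2 / 2) =
          Real.exp (x * y) * Real.exp (-x ^ 2 / 2) / 2 +
          Real.exp (-(x * y)) * Real.exp (-x ^ 2 / 2) / 2 := by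
        intro x; rw [Real.cosh_eq]; ring
      simp_rw [e1]
      rw [integral_add (hint_pos.div_const 2) (hint_neg.div_const 2),
        integral_div, integral_div, ← hneg]
      ring
    -- convolution integral
    have hconv : (∫ x, Real.exp (-(y - x) ^ 2 / 2) / Real.sqrt (2 * π) ∂(P n)) =
        (Real.exp (-y ^ 2 / 2) / Real.sqrt (2 * π)) *
          ∫ x, Real.exp (x * y) * Real.exp (-x ^ 2 / 2) ∂(P n) := by
      have e2 : ∀ x : ℝ, Real.exp (-(y - x) ^ 2 / 2) / Real.sqrt (2 * π) =
          (Real.exp (-y ^ 2 / 2) / Real.sqrt (2 * π)) *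
            (Real.exp (x * y) * Real.exp (-x ^ 2 / 2)) := by
        intro x
        rw [div_mul_eq_mul_div]
        congr 1
        rw [← Real.exp_add, ← Real.exp_add]
        congr 1
        ring
      simp_rw [e2]
      rw [integral_const_mul]
    -- w integral
    have hwint : (∫ x, w x ∂(P n)) =
        (∫ x, Real.cosh (x * y) * Real.exp (-x ^ 2 / 2) ∂(P n)) -
          ∫ x, Real.exp (-x ^ 2 / 2) ∂(P n) := by
      have e3 : ∀ x : ℝ, w x =
          Real.cosh (x * y) * Real.exp (-x ^ 2 / 2) - Real.exp (-x ^ 2 / 2) := by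
        intro x; rw [hw]; ring
      simp_rw [e3]
      exact integral_sub hint_cosh hint_exp
    rw [hconv, hwint, hcosh]
    ring
  simp only [heq]
  exact key
end

section
/- Let p_σ(x) = 0.8·(1/(σ√(2π)))·e^{−x²/(2σ²)} + 0.2·σ/(π(σ² + x²)) be the atom-free spike-and-slab mixture of a N(0,σ²) density and a Cauchy density with probable error σ. Then for every x ≠ 0, lim_{σ→0⁺} p_σ(x)/(0.2·σ·√(2/π)) = 1/(x²·√(2π)). -/
open Filter Real Topology

/-!
Divided by the rate `0.2·σ·√(2/π)`, the Cauchy part of the mixture becomes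
`1/(√(2π)(σ² + x²))`, which is continuous at `σ = 0` with value `1/(x²√(2π))`, while the
Gaussian part becomes `2·exp(-x²/(2σ²))/σ²`: with `u = σ⁻²` this is `2u·exp(-(x²/2)u)`,
which vanishes as `u → ∞` because `x ≠ 0`.
-/

lemma tendsto_inv_sq_nhdsNE_zero : Tendsto (fun σ : ℝ => (σ ^ 2)⁻¹) (𝓝[≠] 0) atTop := by
  refine tendsto_inv_nhdsGT_zero.comp (tendsto_nhdsWithin_of_tendsto_nhds_of_eventually_within _
    ?_ ?_)
  · simpa using ((continuous_pow 2).tendsto (0 : ℝ)).mono_left nhdsWithin_le_nhds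
  · filter_upwards [self_mem_nhdsWithin] with σ hσ using sq_pos_of_ne_zero hσ

lemma tendsto_exp_neg_div_sq_div_sq {a : ℝ} (ha : 0 < a) :
    Tendsto (fun σ : ℝ => exp (-a / σ ^ 2) / σ ^ 2) (𝓝[≠] 0) (𝓝 0) := by
  have hu : Tendsto (fun u : ℝ => u * exp (-a * u)) atTop (𝓝 0) := by
    simpa using tendsto_rpow_mul_exp_neg_mul_atTop_nhds_zero 1 a ha
  refine (hu.comp tendsto_inv_sq_nhdsNE_zero).congr fun σ => ?_
  simp only [Function.comp_apply]
  ring_nf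

lemma sqrt_two_mul_pi_mul_sqrt_two_div_pi : √(2 * π) * √(2 / π) = 2 := by
  rw [← sqrt_mul (by positivity), show 2 * π * (2 / π) = 2 ^ 2 by field_simp,
    sqrt_sq zero_le_two]

lemma spike_and_slab_ratio_eq {σ : ℝ} (hσ : σ ≠ 0) (x : ℝ) :
    (0.8 * (1 / (σ * √(2 * π))) * exp (-x ^ 2 / (2 * σ ^ 2)) +
        0.2 * (σ / (π * (σ ^ 2 + x ^ 2)))) / (0.2 * σ * √(2 / π)) =
      2 * (exp (-(x ^ 2 / 2) / σ ^ 2) / σ ^ 2) + 1 / (√(2 * π) * (σ ^ 2 + x ^ 2)) := by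
  have hsum : σ ^ 2 + x ^ 2 ≠ 0 := by positivity
  have hπ : √(2 / π) = 2 / √(2 * π) := by
    rw [eq_div_iff (by positivity), mul_comm, sqrt_two_mul_pi_mul_sqrt_two_div_pi]
  have hsq : √(2 * π) ^ 2 = 2 * π := sq_sqrt (by positivity)
  rw [hπ, show -x ^ 2 / (2 * σ ^ 2) = -(x ^ 2 / 2) / σ ^ 2 by ring]
  field_simp
  linear_combination (0.2 * σ ^ 2) * hsq

/-- The atom-free spike-and-slab mixture `0.8·N(0,σ²) + 0.2·C(σ)` is sparse with rate
`0.2·σ·√(2/π)` and inverse-square exceedance density `1/(x²√(2π))`: for every `x ≠ 0`,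
`p_σ(x)/(0.2 σ √(2/π)) → 1/(x² √(2π))` as `σ → 0⁺`. -/
theorem spike_and_slab_sparse_limit (x : ℝ) (hx : x ≠ 0) :
    Tendsto
      (fun σ : ℝ =>
        (0.8 * (1 / (σ * Real.sqrt (2 * π))) * Real.exp (-x ^ 2 / (2 * σ ^ 2)) +
            0.2 * (σ / (π * (σ ^ 2 + x ^ 2)))) /
          (0.2 * σ * Real.sqrt (2 / π)))
      (𝓝[>] 0) (𝓝 (1 / (x ^ 2 * Real.sqrt (2 * π)))) := by
  have hgauss : Tendsto (fun σ : ℝ => 2 * (exp (-(x ^ 2 / 2) / σ ^ 2) / σ ^ 2)) (𝓝[>] 0)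
      (𝓝 0) := by
    simpa using ((tendsto_exp_neg_div_sq_div_sq (by positivity)).mono_left
      (nhdsGT_le_nhdsNE 0)).const_mul 2
  have hcauchy : Tendsto (fun σ : ℝ => 1 / (√(2 * π) * (σ ^ 2 + x ^ 2))) (𝓝[>] 0)
      (𝓝 (1 / (x ^ 2 * √(2 * π)))) := by
    have hcont : ContinuousAt (fun σ : ℝ => 1 / (√(2 * π) * (σ ^ 2 + x ^ 2))) 0 := by
      fun_prop (disch := positivity)
    simpa [mul_comm] using hcont.tendsto.mono_left nhdsWithin_le_nhds
  refine (zero_add (1 / (x ^ 2 * √(2 * π))) ▸ hgauss.add hcauchy).congr' ?_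
  filter_upwards [self_mem_nhdsWithin] with σ hσ using
    (spike_and_slab_ratio_eq (ne_of_gt hσ) x).symm
end
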